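/- arXiv:1507.00512 — 7 statements merged into one kernel-verified Lean document; each statement's English description precedes it below -/
import Mathlib

section
/- If u₁, u₂, u₃ are three distinct solutions of the Riccati equation u' = f(x) + g(x)u + h(x)u², then for any real constant k, the function u(x) = (u₁(x)(u₃(x) − u₂(x)) + k·u₂(x)(u₁(x) − u₃(x)))/(u₃(x) − u₂(x) + k(u₁(x) − u₃(x))) is also a solution of the same Riccati equation, at every point where the denominator is nonzero. -/
/-!
Writing `u = N / D`, the Riccati equation for `u` at a point where `D ≠ 0` follows from
`N' D - N D' = f D² + g N D + h N²`. For the superposition numerator and denominator, which are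
bilinear in the `uᵢ`, substituting `uᵢ' = f + g uᵢ + h uᵢ²` turns this into a polynomial identity.
-/

theorem HasDerivAt.div_riccati {N D : ℝ → ℝ} {N' D' a b c x : ℝ}
    (hN : HasDerivAt N N' x) (hD : HasDerivAt D D' x) (hD₀ : D x ≠ 0)
    (hW : N' * D x - N x * D' = a * D x ^ 2 + b * N x * D x + c * N x ^ 2) :
    HasDerivAt (fun y => N y / D y) (a + b * (N x / D x) + c * (N x / D x) ^ 2) x := by
  refine (hN.div hD hD₀).congr_deriv ?_
  rw [hW]
  field_simp

theorem riccati_superposition_wronskian (f g h u₁ u₂ u₃ k : ℝ) :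
    let d : ℝ → ℝ := fun v => f + g * v + h * v ^ 2
    let N := u₁ * (u₃ - u₂) + k * u₂ * (u₁ - u₃)
    let D := u₃ - u₂ + k * (u₁ - u₃)
    (d u₁ * (u₃ - u₂) + u₁ * (d u₃ - d u₂) + (k * d u₂ * (u₁ - u₃) + k * u₂ * (d u₁ - d u₃))) * D
        - N * (d u₃ - d u₂ + k * (d u₁ - d u₃)) =
      f * D ^ 2 + g * N * D + h * N ^ 2 := by
  intros
  ring

theorem riccati_superposition_general
    (f g h u₁ u₂ u₃ : ℝ → ℝ) (k : ℝ)
    (h₁ : ∀ x, HasDerivAt u₁ (f x + g x * u₁ x + h x * (u₁ x) ^ 2) x)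
    (h₂ : ∀ x, HasDerivAt u₂ (f x + g x * u₂ x + h x * (u₂ x) ^ 2) x)
    (h₃ : ∀ x, HasDerivAt u₃ (f x + g x * u₃ x + h x * (u₃ x) ^ 2) x)
    (u : ℝ → ℝ)
    (hu : u = fun x =>
      (u₁ x * (u₃ x - u₂ x) + k * u₂ x * (u₁ x - u₃ x)) /
        (u₃ x - u₂ x + k * (u₁ x - u₃ x))) :
    ∀ x, u₃ x - u₂ x + k * (u₁ x - u₃ x) ≠ 0 →
      HasDerivAt u (f x + g x * u x + h x * (u x) ^ 2) x := by
  intro x hD₀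
  subst hu
  have hN := ((h₁ x).mul ((h₃ x).sub (h₂ x))).add (((h₂ x).const_mul k).mul ((h₁ x).sub (h₃ x)))
  have hD := ((h₃ x).sub (h₂ x)).add (((h₁ x).sub (h₃ x)).const_mul k)
  exact hN.div_riccati hD hD₀
    (riccati_superposition_wronskian (f x) (g x) (h x) (u₁ x) (u₂ x) (u₃ x) k)

/-- Nonlinear superposition rule for the Riccati equation: given three distinct
solutions `u₁, u₂, u₃` of `u' = f + g·u + h·u²` and any `k ∈ ℝ`, the combination
`(u₁(u₃−u₂) + k u₂(u₁−u₃))/(u₃−u₂+k(u₁−u₃))` is again a solution wherever the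
denominator does not vanish. -/
theorem riccati_superposition
    (f g h u₁ u₂ u₃ : ℝ → ℝ) (k : ℝ)
    (h₁ : ∀ x, HasDerivAt u₁ (f x + g x * u₁ x + h x * (u₁ x) ^ 2) x)
    (h₂ : ∀ x, HasDerivAt u₂ (f x + g x * u₂ x + h x * (u₂ x) ^ 2) x)
    (h₃ : ∀ x, HasDerivAt u₃ (f x + g x * u₃ x + h x * (u₃ x) ^ 2) x)
    (h₁₂ : u₁ ≠ u₂) (h₂₃ : u₂ ≠ u₃) (h₁₃ : u₁ ≠ u₃)
    (u : ℝ → ℝ)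
    (hu : u = fun x =>
      (u₁ x * (u₃ x - u₂ x) + k * u₂ x * (u₁ x - u₃ x)) /
        (u₃ x - u₂ x + k * (u₁ x - u₃ x))) :
    ∀ x, u₃ x - u₂ x + k * (u₁ x - u₃ x) ≠ 0 →
      HasDerivAt u (f x + g x * u x + h x * (u x) ^ 2) x :=
  riccati_superposition_general f g h u₁ u₂ u₃ k h₁ h₂ h₃ u hu
end

section
/- If u₁, u₂, u₃, u₄ are four solutions of the Riccati equation u' = f(x) + g(x)u + h(x)u², then the cross-ratio ((u₄ − u₁)/(u₄ − u₂))·((u₃ − u₂)/(u₃ − u₁)) is constant (its derivative vanishes) on any interval where the relevant differences are nonzero. -/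
/-! The difference `w = u - v` of two solutions of `u' = f + g u + h u²` satisfies the linear
equation `w' = (g + h (u + v)) w`, so its logarithmic derivative is `g + h (u + v)`. Logarithmic
derivatives turn the cross-ratio into the alternating sum of those of its four factors, in which
every `g` and every `h uᵢ` cancels. -/

section LogDeriv

variable {𝕜 : Type*} [NontriviallyNormedField 𝕜] {a b : 𝕜 → 𝕜} {p q x : 𝕜}

theorem HasDerivAt.mul_of_logDeriv (ha : HasDerivAt a (a x * p) x)
    (hb : HasDerivAt b (b x * q) x) :
    HasDerivAt (fun y => a y * b y) (a x * b x * (p + q)) x :=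
  (ha.mul hb).congr_deriv (by ring)

theorem HasDerivAt.div_of_logDeriv (ha : HasDerivAt a (a x * p) x)
    (hb : HasDerivAt b (b x * q) x) (hb₀ : b x ≠ 0) :
    HasDerivAt (fun y => a y / b y) (a x / b x * (p - q)) x :=
  (ha.div hb hb₀).congr_deriv (by field_simp)

end LogDeriv

theorem HasDerivAt.sub_of_riccati {𝕜 : Type*} [NontriviallyNormedField 𝕜] {f g h u v : 𝕜 → 𝕜}
    {x : 𝕜} (hu : HasDerivAt u (f x + g x * u x + h x * u x ^ 2) x)
    (hv : HasDerivAt v (f x + g x * v x + h x * v x ^ 2) x) :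
    HasDerivAt (fun y => u y - v y) ((u x - v x) * (g x + h x * (u x + v x))) x :=
  (hu.sub hv).congr_deriv (by ring)

/-- The cross-ratio of four solutions of a Riccati equation is constant: its
derivative vanishes on any interval where the relevant differences are nonzero. -/
theorem riccati_cross_ratio_constant
    (f g h u₁ u₂ u₃ u₄ : ℝ → ℝ) (I : Set ℝ)
    (h₁ : ∀ x ∈ I, HasDerivAt u₁ (f x + g x * u₁ x + h x * (u₁ x) ^ 2) x)
    (h₂ : ∀ x ∈ I, HasDerivAt u₂ (f x + g x * u₂ x + h x * (u₂ x) ^ 2) x)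
    (h₃ : ∀ x ∈ I, HasDerivAt u₃ (f x + g x * u₃ x + h x * (u₃ x) ^ 2) x)
    (h₄ : ∀ x ∈ I, HasDerivAt u₄ (f x + g x * u₄ x + h x * (u₄ x) ^ 2) x)
    (h42 : ∀ x ∈ I, u₄ x - u₂ x ≠ 0)
    (h31 : ∀ x ∈ I, u₃ x - u₁ x ≠ 0) :
    ∀ x ∈ I, HasDerivAt
      (fun x => ((u₄ x - u₁ x) / (u₄ x - u₂ x)) * ((u₃ x - u₂ x) / (u₃ x - u₁ x)))
      0 x := by
  intro x hx
  have d₄₁ := (h₄ x hx).sub_of_riccati (h₁ x hx)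
  have d₄₂ := (h₄ x hx).sub_of_riccati (h₂ x hx)
  have d₃₂ := (h₃ x hx).sub_of_riccati (h₂ x hx)
  have d₃₁ := (h₃ x hx).sub_of_riccati (h₁ x hx)
  refine ((d₄₁.div_of_logDeriv d₄₂ (h42 x hx)).mul_of_logDeriv
    (d₃₂.div_of_logDeriv d₃₁ (h31 x hx))).congr_deriv ?_
  ring
end

section
/- Let ψ₁ and ψ₂ be solutions of Hill's equation ψ'' + v(x)ψ = 0 with constant Wronskian W = ψ₁ψ₂' − ψ₂ψ₁', and let A, B, C ∈ ℝ with A·ψ₁² + 2B·ψ₁ψ₂ + C·ψ₂² > 0 on an interval I. Then ψ = √(Aψ₁² + 2Bψ₁ψ₂ + Cψ₂²) satisfies the Milne–Pinney equation ψ'' + v·ψ = σ/ψ³ on I, where σ = (AC − B²)·W². -/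
/-!
Let `q` be the symmetric bilinear form with matrix `[[A, B], [B, C]]` and `Q = q(ψ, ψ)` along
`ψ = (ψ₁, ψ₂)`. Hill's equation gives `Q' = 2 q(ψ, ψ')` and `Q'' = 2 q(ψ', ψ') - 2vQ`. Since
`(√Q)'' = (2QQ'' - Q'²) / (4 √Q³)`, this yields `(√Q)'' + v√Q = (q(ψ, ψ) q(ψ', ψ') - q(ψ, ψ')²) / √Q³`,
and by the Lagrange identity for binary forms the numerator is `(AC - B²)(ψ₁ψ₂' - ψ₂ψ₁')² = (AC - B²)W²`.
-/

open Filter Topology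

def polarForm (A B C a₁ a₂ b₁ b₂ : ℝ) : ℝ :=
  A * a₁ * b₁ + B * (a₁ * b₂ + a₂ * b₁) + C * a₂ * b₂

section polarForm

variable (A B C a₁ a₂ b₁ b₂ : ℝ)

theorem polarForm_self :
    polarForm A B C a₁ a₂ a₁ a₂ = A * a₁ ^ 2 + 2 * B * a₁ * a₂ + C * a₂ ^ 2 := by
  unfold polarForm; ring

theorem polarForm_comm : polarForm A B C a₁ a₂ b₁ b₂ = polarForm A B C b₁ b₂ a₁ a₂ := by
  unfold polarForm; ring

theorem polarForm_smul_right (c : ℝ) :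
    polarForm A B C a₁ a₂ (c * b₁) (c * b₂) = c * polarForm A B C a₁ a₂ b₁ b₂ := by
  unfold polarForm; ring

theorem polarForm_self_mul_polarForm_self_sub_sq :
    polarForm A B C a₁ a₂ a₁ a₂ * polarForm A B C b₁ b₂ b₁ b₂ - polarForm A B C a₁ a₂ b₁ b₂ ^ 2 =
      (A * C - B ^ 2) * (a₁ * b₂ - a₂ * b₁) ^ 2 := by
  unfold polarForm; ring

end polarForm

theorem HasDerivAt.polarForm {u₁ u₂ w₁ w₂ : ℝ → ℝ} {u₁' u₂' w₁' w₂' x : ℝ} (A B C : ℝ)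
    (hu₁ : HasDerivAt u₁ u₁' x) (hu₂ : HasDerivAt u₂ u₂' x)
    (hw₁ : HasDerivAt w₁ w₁' x) (hw₂ : HasDerivAt w₂ w₂' x) :
    HasDerivAt (fun y => polarForm A B C (u₁ y) (u₂ y) (w₁ y) (w₂ y))
      (polarForm A B C u₁' u₂' (w₁ x) (w₂ x) + polarForm A B C (u₁ x) (u₂ x) w₁' w₂') x := by
  have h := (((hu₁.const_mul A).mul hw₁).add
    (((hu₁.mul hw₂).add (hu₂.mul hw₁)).const_mul B)).add ((hu₂.const_mul C).mul hw₂)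
  unfold _root_.polarForm
  exact h.congr_deriv (by ring)

theorem hasDerivAt_deriv_sqrt {f f' : ℝ → ℝ} {f'' x : ℝ}
    (hf : ∀ᶠ y in 𝓝 x, HasDerivAt f (f' y) y) (hf' : HasDerivAt f' f'' x) (hx : 0 < f x) :
    HasDerivAt (deriv fun y => √(f y))
      ((2 * f x * f'' - f' x ^ 2) / (4 * √(f x) ^ 3)) x := by
  have hpos : ∀ᶠ y in 𝓝 x, 0 < f y :=
    hf.self_of_nhds.continuousAt.eventually (lt_mem_nhds hx)
  have hderiv : deriv (fun y => √(f y)) =ᶠ[𝓝 x] fun y => f' y / (2 * √(f y)) := by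
    filter_upwards [hf, hpos] with y hy hy0
    exact (hy.sqrt hy0.ne').deriv
  have hs : 0 < √(f x) := Real.sqrt_pos.mpr hx
  have h := hf'.div ((hf.self_of_nhds.sqrt hx.ne').const_mul 2) (by positivity)
  refine (h.congr_deriv ?_).congr_of_eventuallyEq hderiv
  have hsq : √(f x) ^ 2 = f x := Real.sq_sqrt hx.le
  field_simp
  rw [hsq]; ring

section Hill

variable {v ψ₁ ψ₁' ψ₂ ψ₂' : ℝ → ℝ} {x : ℝ} (A B C : ℝ)

theorem hasDerivAt_polarForm_self
    (h₁ : HasDerivAt ψ₁ (ψ₁' x) x) (h₂ : HasDerivAt ψ₂ (ψ₂' x) x) :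
    HasDerivAt (fun y => polarForm A B C (ψ₁ y) (ψ₂ y) (ψ₁ y) (ψ₂ y))
      (2 * polarForm A B C (ψ₁ x) (ψ₂ x) (ψ₁' x) (ψ₂' x)) x := by
  refine (h₁.polarForm A B C h₂ h₁ h₂).congr_deriv ?_
  rw [polarForm_comm A B C (ψ₁' x)]
  ring

theorem hasDerivAt_polarForm_of_hill
    (h₁ : HasDerivAt ψ₁ (ψ₁' x) x) (h₁' : HasDerivAt ψ₁' (-(v x * ψ₁ x)) x)
    (h₂ : HasDerivAt ψ₂ (ψ₂' x) x) (h₂' : HasDerivAt ψ₂' (-(v x * ψ₂ x)) x) :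
    HasDerivAt (fun y => polarForm A B C (ψ₁ y) (ψ₂ y) (ψ₁' y) (ψ₂' y))
      (polarForm A B C (ψ₁' x) (ψ₂' x) (ψ₁' x) (ψ₂' x)
        - v x * polarForm A B C (ψ₁ x) (ψ₂ x) (ψ₁ x) (ψ₂ x)) x := by
  refine (h₁.polarForm A B C h₂ h₁' h₂').congr_deriv ?_
  simp only [neg_mul_eq_neg_mul, polarForm_smul_right]
  ring

end Hill

/-- Superposition rule for the Milne–Pinney equation: if `ψ₁, ψ₂` solve Hill's
equation with constant Wronskian `W`, and `Q = Aψ₁² + 2Bψ₁ψ₂ + Cψ₂² > 0` on `I`,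
then `ψ = √Q` satisfies `ψ'' + v ψ = σ/ψ³` with `σ = (AC − B²)W²`. -/
theorem milne_pinney_superposition
    (v ψ₁ ψ₁' ψ₂ ψ₂' : ℝ → ℝ) (I : Set ℝ) (hI : IsOpen I) (A B C W : ℝ)
    (hp1 : ∀ x ∈ I, HasDerivAt ψ₁ (ψ₁' x) x)
    (hp1' : ∀ x ∈ I, HasDerivAt ψ₁' (-(v x * ψ₁ x)) x)
    (hp2 : ∀ x ∈ I, HasDerivAt ψ₂ (ψ₂' x) x)
    (hp2' : ∀ x ∈ I, HasDerivAt ψ₂' (-(v x * ψ₂ x)) x)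
    (hW : ∀ x ∈ I, ψ₁ x * ψ₂' x - ψ₂ x * ψ₁' x = W)
    (hQ : ∀ x ∈ I, A * (ψ₁ x) ^ 2 + 2 * B * ψ₁ x * ψ₂ x + C * (ψ₂ x) ^ 2 > 0)
    (ψ : ℝ → ℝ)
    (hψ : ψ = fun x =>
      Real.sqrt (A * (ψ₁ x) ^ 2 + 2 * B * ψ₁ x * ψ₂ x + C * (ψ₂ x) ^ 2))
    (σ : ℝ) (hσ : σ = (A * C - B ^ 2) * W ^ 2) :
    ∀ x ∈ I, deriv (deriv ψ) x + v x * ψ x = σ / (ψ x) ^ 3 := by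
  intro x hx
  simp only [← polarForm_self] at hψ hQ
  subst hψ hσ
  have hψ'' := (hasDerivAt_deriv_sqrt
    (eventually_of_mem (hI.mem_nhds hx) fun y hy =>
      hasDerivAt_polarForm_self A B C (hp1 y hy) (hp2 y hy))
    ((hasDerivAt_polarForm_of_hill A B C (hp1 x hx) (hp1' x hx) (hp2 x hx) (hp2' x hx)).const_mul 2)
    (hQ x hx)).deriv
  have hlagrange := polarForm_self_mul_polarForm_self_sub_sq A B C (ψ₁ x) (ψ₂ x) (ψ₁' x) (ψ₂' x)
  rw [hW x hx] at hlagrange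
  have hsq := Real.sq_sqrt (hQ x hx).le
  have hsqrt_pos := Real.sqrt_pos.mpr (hQ x hx)
  rw [hψ'', ← hlagrange]
  field_simp
  set q := polarForm A B C (ψ₁ x) (ψ₂ x) (ψ₁ x) (ψ₂ x)
  linear_combination 4 * v x * (√q ^ 2 + q) * hsq
end

section
/- Let ψ₁ and ψ₂ be functionally independent solutions of y'' + r(x)y' + q(x)y = 0 with Wronskian W = ψ₁ψ₂' − ψ₂ψ₁', and let m ∈ ℝ, A, B ∈ ℝ with Ψ = (Aψ₁^m + Bψ₂^m)^{1/m} well-defined and positive on I. Then Ψ satisfies the Reid equation Ψ'' + rΨ' + qΨ = AB(m−1)(ψ₁ψ₂)^{m−2} W²/Ψ^{2m−1} on I. -/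
private lemma rpow_succ' {x : ℝ} (hx : 0 < x) (t : ℝ) : x ^ (t + 1) = x ^ t * x := by
  rw [Real.rpow_add hx, Real.rpow_one]

/-- Reid's theorem: if `ψ₁, ψ₂` are positive solutions of `y'' + r y' + q y = 0`
with Wronskian `W`, `m ≠ 0` and `Aψ₁^m + Bψ₂^m > 0` on `I`, then
`Ψ = (Aψ₁^m + Bψ₂^m)^{1/m}` satisfies
`Ψ'' + r Ψ' + q Ψ = A B (m−1)(ψ₁ψ₂)^{m−2} W² / Ψ^{2m−1}`. -/
theorem reid_equation_superposition
    (r q ψ₁ ψ₁' ψ₂ ψ₂' : ℝ → ℝ) (I : Set ℝ) (hI : IsOpen I) (m A B : ℝ)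
    (hm : m ≠ 0)
    (hpos1 : ∀ x ∈ I, ψ₁ x > 0) (hpos2 : ∀ x ∈ I, ψ₂ x > 0)
    (hp1 : ∀ x ∈ I, HasDerivAt ψ₁ (ψ₁' x) x)
    (hp1' : ∀ x ∈ I, HasDerivAt ψ₁' (-(r x * ψ₁' x) - q x * ψ₁ x) x)
    (hp2 : ∀ x ∈ I, HasDerivAt ψ₂ (ψ₂' x) x)
    (hp2' : ∀ x ∈ I, HasDerivAt ψ₂' (-(r x * ψ₂' x) - q x * ψ₂ x) x)
    (hAB : ∀ x ∈ I, A * (ψ₁ x) ^ m + B * (ψ₂ x) ^ m > 0)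
    (Ψ : ℝ → ℝ)
    (hΨ : Ψ = fun x => (A * (ψ₁ x) ^ m + B * (ψ₂ x) ^ m) ^ (1 / m)) :
    ∀ x ∈ I, deriv (deriv Ψ) x + r x * deriv Ψ x + q x * Ψ x =
      A * B * (m - 1) * (ψ₁ x * ψ₂ x) ^ (m - 2)
        * (ψ₁ x * ψ₂' x - ψ₂ x * ψ₁' x) ^ 2 / (Ψ x) ^ (2 * m - 1) := by
  have hU : ∀ y ∈ I, HasDerivAt (fun z => A * ψ₁ z ^ m + B * ψ₂ z ^ m)
      (A * (ψ₁' y * m * ψ₁ y ^ (m - 1)) + B * (ψ₂' y * m * ψ₂ y ^ (m - 1))) y := by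
    intro y hy
    exact (((hp1 y hy).rpow_const (Or.inl (hpos1 y hy).ne')).const_mul A).add
      (((hp2 y hy).rpow_const (Or.inl (hpos2 y hy).ne')).const_mul B)
  set Φ : ℝ → ℝ := fun y => (A * ψ₁ y ^ m + B * ψ₂ y ^ m) ^ (1 / m - 1) *
      (A * ψ₁ y ^ (m - 1) * ψ₁' y + B * ψ₂ y ^ (m - 1) * ψ₂' y) with hΦdef
  have hΨd : ∀ y ∈ I, HasDerivAt Ψ (Φ y) y := by
    intro y hy
    have h := (hU y hy).rpow_const (p := 1 / m) (Or.inl (hAB y hy).ne')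
    rw [hΨ]
    convert h using 1
    rw [hΦdef]
    field_simp
  intro x hx
  have ha := hpos1 x hx
  have hb := hpos2 x hx
  have hu := hAB x hx
  have hdd : deriv (deriv Ψ) x = deriv Φ x := by
    apply Filter.EventuallyEq.deriv_eq
    filter_upwards [hI.mem_nhds hx] with y hy
    exact (hΨd y hy).deriv
  have hva : HasDerivAt (fun z => A * ψ₁ z ^ (m - 1) * ψ₁' z)
      (A * (ψ₁' x * (m - 1) * ψ₁ x ^ (m - 1 - 1)) * ψ₁' x
        + A * ψ₁ x ^ (m - 1) * (-(r x * ψ₁' x) - q x * ψ₁ x)) x :=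
    (((hp1 x hx).rpow_const (Or.inl ha.ne')).const_mul A).mul (hp1' x hx)
  have hvb : HasDerivAt (fun z => B * ψ₂ z ^ (m - 1) * ψ₂' z)
      (B * (ψ₂' x * (m - 1) * ψ₂ x ^ (m - 1 - 1)) * ψ₂' x
        + B * ψ₂ x ^ (m - 1) * (-(r x * ψ₂' x) - q x * ψ₂ x)) x :=
    (((hp2 x hx).rpow_const (Or.inl hb.ne')).const_mul B).mul (hp2' x hx)
  have hw : HasDerivAt (fun z => (A * ψ₁ z ^ m + B * ψ₂ z ^ m) ^ (1 / m - 1))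
      ((A * (ψ₁' x * m * ψ₁ x ^ (m - 1)) + B * (ψ₂' x * m * ψ₂ x ^ (m - 1)))
        * (1 / m - 1) * (A * ψ₁ x ^ m + B * ψ₂ x ^ m) ^ (1 / m - 1 - 1)) x :=
    (hU x hx).rpow_const (Or.inl hu.ne')
  have hΦ' : HasDerivAt Φ
      (((A * (ψ₁' x * m * ψ₁ x ^ (m - 1)) + B * (ψ₂' x * m * ψ₂ x ^ (m - 1)))
        * (1 / m - 1) * (A * ψ₁ x ^ m + B * ψ₂ x ^ m) ^ (1 / m - 1 - 1))
        * (A * ψ₁ x ^ (m - 1) * ψ₁' x + B * ψ₂ x ^ (m - 1) * ψ₂' x)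
      + (A * ψ₁ x ^ m + B * ψ₂ x ^ m) ^ (1 / m - 1)
        * ((A * (ψ₁' x * (m - 1) * ψ₁ x ^ (m - 1 - 1)) * ψ₁' x
            + A * ψ₁ x ^ (m - 1) * (-(r x * ψ₁' x) - q x * ψ₁ x))
          + (B * (ψ₂' x * (m - 1) * ψ₂ x ^ (m - 1 - 1)) * ψ₂' x
            + B * ψ₂ x ^ (m - 1) * (-(r x * ψ₂' x) - q x * ψ₂ x)))) x := by
    rw [hΦdef]
    exact hw.mul (hva.add hvb)
  rw [hdd, hΦ'.deriv, (hΨd x hx).deriv, hΦdef]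
  simp only [hΨ]
  set a := ψ₁ x with hadef
  set b := ψ₂ x with hbdef
  set a' := ψ₁' x with hadef'
  set b' := ψ₂' x with hbdef'
  -- exponent normalizations
  rw [show m - 1 - 1 = m - 2 by ring, show 1 / m - 1 - 1 = 1 / m - 2 by ring]
  have hpow : ((A * a ^ m + B * b ^ m) ^ (1 / m)) ^ (2 * m - 1)
      = (A * a ^ m + B * b ^ m) ^ (2 - 1 / m) := by
    rw [← Real.rpow_mul hu.le, show (1 / m) * (2 * m - 1) = 2 - 1 / m by field_simp]
  rw [hpow, show (2 : ℝ) - 1 / m = -(1 / m - 2) by ring, Real.rpow_neg hu.le, div_inv_eq_mul]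
  have hu1 : (A * a ^ m + B * b ^ m) ^ (1 / m - 1)
      = (A * a ^ m + B * b ^ m) ^ (1 / m - 2) * (A * a ^ m + B * b ^ m) := by
    rw [← rpow_succ' hu, show 1 / m - 2 + 1 = 1 / m - 1 by ring]
  have hu2 : (A * a ^ m + B * b ^ m) ^ (1 / m)
      = (A * a ^ m + B * b ^ m) ^ (1 / m - 2) * (A * a ^ m + B * b ^ m)
        * (A * a ^ m + B * b ^ m) := by
    rw [← rpow_succ' hu, ← rpow_succ' hu, show 1 / m - 2 + 1 + 1 = 1 / m by ring]
  rw [hu1, hu2]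
  rw [Real.mul_rpow ha.le hb.le]
  have h1a : a ^ (m - 1) = a ^ (m - 2) * a := by
    rw [← rpow_succ' ha, show m - 2 + 1 = m - 1 by ring]
  have h1b : b ^ (m - 1) = b ^ (m - 2) * b := by
    rw [← rpow_succ' hb, show m - 2 + 1 = m - 1 by ring]
  have h2a : a ^ m = a ^ (m - 2) * a * a := by
    rw [← rpow_succ' ha, ← rpow_succ' ha, show m - 2 + 1 + 1 = m by ring]
  have h2b : b ^ m = b ^ (m - 2) * b * b := by
    rw [← rpow_succ' hb, ← rpow_succ' hb, show m - 2 + 1 + 1 = m by ring]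
  rw [h1a, h1b, h2a, h2b]
  field_simp
  ring
end

section
/- Let v be differentiable. The vector field Y = f(x)∂_x + g(x,u)∂_u with g(x,u) = −f'(x)·u − (1/2)f''(x) is an infinitesimal symmetry of the standard Riccati equation u' = u² + v(x) — i.e., the symmetry condition ∂_x g + (u² + v)∂_u g − f·v' − 2g·u = (u² + v)·f' holds identically in (x,u) — if and only if f satisfies the projective vector field equation f''' + 4v·f' + 2v'·f = 0. -/
/-- The vector field `Y = f ∂ₓ + g ∂ᵤ` with `g(x,u) = −f' u − (1/2) f''` is an
infinitesimal symmetry of the standard Riccati equation `u' = u² + v(x)` if and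
only if `f` solves the projective vector field equation
`f''' + 4 v f' + 2 v' f = 0`. -/
theorem riccati_symmetry_iff_projective
    (v v' f f' f'' f''' : ℝ → ℝ)
    (hv : ∀ x, HasDerivAt v (v' x) x)
    (hf1 : ∀ x, HasDerivAt f (f' x) x)
    (hf2 : ∀ x, HasDerivAt f' (f'' x) x)
    (hf3 : ∀ x, HasDerivAt f'' (f''' x) x)
    (g : ℝ → ℝ → ℝ)
    (hg : g = fun x u => -(f' x) * u - (1 / 2) * f'' x) :
    (∀ x u : ℝ,
        (-(f'' x) * u - (1 / 2) * f''' x)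
          + (u ^ 2 + v x) * (-(f' x))
          - f x * v' x - 2 * g x u * u
        = (u ^ 2 + v x) * f' x)
      ↔ (∀ x, f''' x + 4 * v x * f' x + 2 * v' x * f x = 0) := by
  subst hg
  constructor
  · intro h x
    have := h x 0
    nlinarith [this]
  · intro h x u
    have := h x
    nlinarith [this]
end

section
/- Let (u, w) solve the Hamiltonian system u' = w − u² − x/2, w' = 2u·w + α + 1/2 associated with Painlevé II. Then u satisfies the Painlevé II equation u'' = 2u³ + x·u + α, and the function h(x) = H(x, u(x), w(x)), where H(x,u,w) = w²/2 − (u² + x/2)w − (α + 1/2)u, satisfies h' = −w/2 and the second-degree equation (h'')² + 4(h')³ + 2h'(x·h' − h) − (1/4)(α + 1/2)² = 0. -/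
/-- For the Hamiltonian system `u' = w − u² − x/2`, `w' = 2 u w + α + 1/2`
associated with Painlevé II: `u` satisfies `u'' = 2u³ + x u + α`, and the
Hamiltonian along solutions, `h = H(x, u, w)`, satisfies `h' = −w/2` and the
second-degree Painlevé II equation
`(h'')² + 4(h')³ + 2 h'(x h' − h) − (1/4)(α + 1/2)² = 0`. -/
theorem painleveII_hamiltonian_system
    (α : ℝ) (u w : ℝ → ℝ) (I : Set ℝ) (hI : IsOpen I)
    (hu : ∀ x ∈ I, HasDerivAt u (w x - (u x) ^ 2 - x / 2) x)
    (hw : ∀ x ∈ I, HasDerivAt w (2 * u x * w x + α + 1 / 2) x)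
    (h : ℝ → ℝ)
    (hh : h = fun x =>
      (w x) ^ 2 / 2 - ((u x) ^ 2 + x / 2) * w x - (α + 1 / 2) * u x) :
    (∀ x ∈ I, deriv (deriv u) x = 2 * (u x) ^ 3 + x * u x + α) ∧
    (∀ x ∈ I, HasDerivAt h (-(w x) / 2) x) ∧
    (∀ x ∈ I, (deriv (deriv h) x) ^ 2 + 4 * (deriv h x) ^ 3
        + 2 * deriv h x * (x * deriv h x - h x)
        - (1 / 4) * (α + 1 / 2) ^ 2 = 0) := by
  -- derivative of u on I
  have hdu : ∀ x ∈ I, deriv u x = w x - (u x) ^ 2 - x / 2 := fun x hx =>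
    (hu x hx).deriv
  -- h has derivative -w/2
  have hh' : ∀ x ∈ I, HasDerivAt h (-(w x) / 2) x := by
    intro x hx
    have Hu := hu x hx
    have Hw := hw x hx
    have H : HasDerivAt h
        ((2 * w x ^ 1 * (2 * u x * w x + α + 1 / 2)) / 2
          - ((2 * u x ^ 1 * (w x - u x ^ 2 - x / 2) + 1 / 2) * w x
            + (u x ^ 2 + x / 2) * (2 * u x * w x + α + 1 / 2))
          - (α + 1 / 2) * (w x - u x ^ 2 - x / 2)) x := by
      rw [hh]
      exact (((Hw.pow 2).div_const 2).sub
        (((Hu.pow 2).add ((hasDerivAt_id x).div_const 2)).mul Hw)).sub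
        (Hu.const_mul (α + 1 / 2))
    convert H using 1
    ring
  have hdh : ∀ x ∈ I, deriv h x = -(w x) / 2 := fun x hx => (hh' x hx).deriv
  -- second derivative of u
  have hddu : ∀ x ∈ I, deriv (deriv u) x = 2 * (u x) ^ 3 + x * u x + α := by
    intro x hx
    have heq : deriv u =ᶠ[nhds x] fun y => w y - (u y) ^ 2 - y / 2 := by
      filter_upwards [hI.mem_nhds hx] with y hy using hdu y hy
    rw [heq.deriv_eq]
    have Hu := hu x hx
    have Hw := hw x hx
    have H : HasDerivAt (fun y => w y - (u y) ^ 2 - y / 2)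
        ((2 * u x * w x + α + 1 / 2)
          - 2 * u x ^ 1 * (w x - u x ^ 2 - x / 2) - 1 / 2) x :=
      (Hw.sub (Hu.pow 2)).sub ((hasDerivAt_id x).div_const 2)
    rw [H.deriv]
    ring
  refine ⟨hddu, hh', ?_⟩
  intro x hx
  have heq : deriv h =ᶠ[nhds x] fun y => -(w y) / 2 := by
    filter_upwards [hI.mem_nhds hx] with y hy using hdh y hy
  have Hw := hw x hx
  have H : HasDerivAt (fun y => -(w y) / 2)
      (-(2 * u x * w x + α + 1 / 2) / 2) x := Hw.neg.div_const 2
  rw [heq.deriv_eq, H.deriv, hdh x hx, hh]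
  ring
end

section
/- Let f be a positive three-times differentiable function and v, β given. If f solves y''' + 4v̄·y' + 2v̄'·y + 6β·y·y' = 0 where v̄ = v − β·f, then ψ = √f satisfies (ψ''·ψ³ + v̄·ψ⁴ + β·ψ⁶)' = 0; hence there is a constant σ such that ψ'' + v̄·ψ + β·ψ³ = σ/ψ³. -/
/-!
With `ψ = √f`, the quantity `ψ'' ψ³ + v̄ ψ⁴ + β ψ⁶` equals `f f''/2 - f'²/4 + v f²`: the `β`-terms
cancel because `ψ² = f`. The derivative of the latter is `f/2 · (f''' + 4 v f' + 2 v' f)`, and the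
bracket is exactly the left-hand side of the third-order equation once `v̄ = v - β f` is expanded.
So the quantity is constant on the interval, and dividing by `ψ³` gives the Ermakov–Painlevé II
equation.
-/

section SqrtSecondDeriv

variable {f f' f'' : ℝ → ℝ} {s : Set ℝ}

lemma eqOn_deriv_sqrt (hf : ∀ x ∈ s, HasDerivAt f (f' x) x) (hpos : ∀ x ∈ s, 0 < f x) :
    s.EqOn (deriv fun x => √(f x)) (fun x => f' x / (2 * √(f x))) :=
  fun x hx => ((hf x hx).sqrt (hpos x hx).ne').deriv

lemma deriv_deriv_sqrt_mul_sqrt_pow_three (hs : IsOpen s)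
    (hf : ∀ x ∈ s, HasDerivAt f (f' x) x) (hf' : ∀ x ∈ s, HasDerivAt f' (f'' x) x)
    (hpos : ∀ x ∈ s, 0 < f x) {x : ℝ} (hx : x ∈ s) :
    deriv (deriv fun x => √(f x)) x * √(f x) ^ 3 = f x * f'' x / 2 - f' x ^ 2 / 4 := by
  have hr : 0 < √(f x) := Real.sqrt_pos.2 (hpos x hx)
  have hd : HasDerivAt (fun y => f' y / (2 * √(f y))) _ x :=
    (hf' x hx).div (((hf x hx).sqrt (hpos x hx).ne').const_mul 2) (by positivity)
  rw [(eqOn_deriv_sqrt hf hpos).deriv hs hx, hd.deriv]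
  field_simp
  linear_combination 8 * f'' x * Real.sq_sqrt (hpos x hx).le

end SqrtSecondDeriv

/-- In terms of `ψ = √f` this is `ψ'' ψ³ + v ψ⁴`. -/
noncomputable def ermakovInvariant (v f f' f'' : ℝ → ℝ) (x : ℝ) : ℝ :=
  f x * f'' x / 2 - f' x ^ 2 / 4 + v x * f x ^ 2

lemma hasDerivAt_ermakovInvariant {v v' f f' f'' f''' : ℝ → ℝ} {x : ℝ}
    (hv : HasDerivAt v (v' x) x) (hf : HasDerivAt f (f' x) x) (hf' : HasDerivAt f' (f'' x) x)
    (hf'' : HasDerivAt f'' (f''' x) x) :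
    HasDerivAt (ermakovInvariant v f f' f'')
      (f x / 2 * (f''' x + 4 * v x * f' x + 2 * v' x * f x)) x := by
  have h := ((hf.mul hf'').div_const 2).sub ((hf'.pow 2).div_const 4) |>.add (hv.mul (hf.pow 2))
  exact h.congr_deriv (by simp only [Pi.pow_apply]; ring)

lemma eqOn_ermakovInvariant_sqrt {v f f' f'' : ℝ → ℝ} {s : Set ℝ} (β : ℝ) (hs : IsOpen s)
    (hf : ∀ x ∈ s, HasDerivAt f (f' x) x) (hf' : ∀ x ∈ s, HasDerivAt f' (f'' x) x)
    (hpos : ∀ x ∈ s, 0 < f x) :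
    s.EqOn (fun x => deriv (deriv fun x => √(f x)) x * √(f x) ^ 3
        + (v x - β * f x) * √(f x) ^ 4 + β * √(f x) ^ 6)
      (ermakovInvariant v f f' f'') := by
  intro x hx
  have hsq : √(f x) ^ 2 = f x := Real.sq_sqrt (hpos x hx).le
  simp only [ermakovInvariant, ← deriv_deriv_sqrt_mul_sqrt_pow_three hs hf hf' hpos hx]
  linear_combination ((v x - β * f x) * (√(f x) ^ 2 + f x)
    + β * (√(f x) ^ 4 + √(f x) ^ 2 * f x + f x ^ 2)) * hsq

/-- If `f > 0` solves `y''' + 4 v̄ y' + 2 v̄' y + 6 β y y' = 0` with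
`v̄ = v − β f`, then `ψ = √f` satisfies `(ψ'' ψ³ + v̄ ψ⁴ + β ψ⁶)' = 0`, hence
there is a constant `σ` with `ψ'' + v̄ ψ + β ψ³ = σ/ψ³` (Ermakov–Painlevé II
type equation). -/
theorem ermakov_painleveII
    (β : ℝ) (v v' f f' f'' f''' : ℝ → ℝ) (I : Set ℝ)
    (hI : IsOpen I) (hconv : Convex ℝ I)
    (hv : ∀ x ∈ I, HasDerivAt v (v' x) x)
    (hfpos : ∀ x ∈ I, f x > 0)
    (hf1 : ∀ x ∈ I, HasDerivAt f (f' x) x)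
    (hf2 : ∀ x ∈ I, HasDerivAt f' (f'' x) x)
    (hf3 : ∀ x ∈ I, HasDerivAt f'' (f''' x) x)
    (heq : ∀ x ∈ I, f''' x + 4 * (v x - β * f x) * f' x
        + 2 * (v' x - β * f' x) * f x + 6 * β * f x * f' x = 0)
    (ψ : ℝ → ℝ) (hψ : ψ = fun x => Real.sqrt (f x)) :
    (∀ x ∈ I, deriv (fun t => deriv (deriv ψ) t * (ψ t) ^ 3
        + (v t - β * f t) * (ψ t) ^ 4 + β * (ψ t) ^ 6) x = 0) ∧
    (∃ σ : ℝ, ∀ x ∈ I, deriv (deriv ψ) x + (v x - β * f x) * ψ x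
        + β * (ψ x) ^ 3 = σ / (ψ x) ^ 3) := by
  subst hψ
  have hE := eqOn_ermakovInvariant_sqrt (v := v) β hI hf1 hf2 hfpos
  have hE' (x : ℝ) (hx : x ∈ I) : HasDerivAt (ermakovInvariant v f f' f'') 0 x := by
    convert hasDerivAt_ermakovInvariant (hv x hx) (hf1 x hx) (hf2 x hx) (hf3 x hx) using 1
    linear_combination -(f x / 2) * heq x hx
  refine ⟨fun x hx => (hE.deriv hI hx).trans (hE' x hx).deriv, ?_⟩
  obtain ⟨σ, hσ⟩ := hI.exists_is_const_of_deriv_eq_zero hconv.isPreconnected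
    (fun x hx => (hE' x hx).differentiableAt.differentiableWithinAt) (fun x hx => (hE' x hx).deriv)
  refine ⟨σ, fun x hx => ?_⟩
  have hψpos : 0 < √(f x) := Real.sqrt_pos.2 (hfpos x hx)
  rw [eq_div_iff (by positivity)]
  linear_combination (hE hx).trans (hσ x hx)
end
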